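/- arXiv:2009.02179 — 3 statements merged into one kernel-verified Lean document; each statement's English description precedes it below -/
import Mathlib

section
/- No realization of the triangular prism is balanced: if v_1,…,v_6 ∈ ℝ^3 affinely span ℝ^3 and are connected according to the edge-graph of the triangular prism, then there is no θ ∈ ℝ with Σ_{j∈N(i)} v_j = θ v_i for all i. -/
open Finset

/-- The edge list of the triangular prism: two triangles `{0,1,2}` and `{3,4,5}`
joined by the edges `03`, `14`, `25`. -/
def prismEdges : List (Fin 6 × Fin 6) :=
  [(0,1), (1,2), (0,2), (3,4), (4,5), (3,5), (0,3), (1,4), (2,5)]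

/-- The edge-graph of the triangular prism. -/
def prismGraph : SimpleGraph (Fin 6) where
  Adj i j := (i, j) ∈ prismEdges ∨ (j, i) ∈ prismEdges
  symm := ⟨by intro i j h; revert h; revert i j; beta_reduce; decide⟩
  loopless := ⟨by intro i; revert i; beta_reduce; decide⟩

instance : DecidableRel prismGraph.Adj :=
  fun _ _ => inferInstanceAs (Decidable (_ ∨ _))

/-!
Put `s = v 0 + v 1 + v 2`. The balance equations at the top triangle give
`v (i + 3) = (θ + 1) • v i - s`, and substituting this into the equations at the bottom triangle
gives `θ (θ + 2) • v i = (2 θ - 1) • s` for `i = 0, 1, 2`. The scalars `θ (θ + 2)` and `2 θ - 1`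
never vanish together, so either `v 0 = v 1 = v 2` or `s = 0`; in both cases all six points lie in
the span of `v 0` and `v 1`. That span has dimension at most two, whereas a set that affinely
spans `ℝ³` also spans it linearly.
-/

open Submodule

theorem Submodule.span_eq_top_of_affineSpan_eq_top {k V : Type*} [Ring k] [AddCommGroup V]
    [Module k V] {s : Set V} (h : affineSpan k s = ⊤) : span k s = ⊤ :=
  eq_top_iff'.2 fun _ ↦ affineSpan_subset_span (by simp [h])

theorem finrank_span_pair_le {R M : Type*} [Ring R] [StrongRankCondition R] [AddCommGroup M]
    [Module R M] (x y : M) : Module.finrank R (span R {x, y}) ≤ 2 := by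
  classical
  exact (finrank_span_le_card _).trans (by simpa using Finset.card_le_two)

def SimpleGraph.IsBalanced {V K M : Type*} [Fintype V] (G : SimpleGraph V) [DecidableRel G.Adj]
    [SMul K M] [AddCommMonoid M] (v : V → M) (θ : K) : Prop :=
  ∀ i, ∑ j ∈ G.neighborFinset i, v j = θ • v i

theorem isBalanced_prismGraph_iff {K M : Type*} [SMul K M] [AddCommMonoid M] {v : Fin 6 → M}
    {θ : K} : prismGraph.IsBalanced v θ ↔
      v 1 + v 2 + v 3 = θ • v 0 ∧ v 0 + v 2 + v 4 = θ • v 1 ∧ v 0 + v 1 + v 5 = θ • v 2 ∧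
      v 0 + v 4 + v 5 = θ • v 3 ∧ v 1 + v 3 + v 5 = θ • v 4 ∧ v 2 + v 3 + v 4 = θ • v 5 := by
  simp only [SimpleGraph.IsBalanced, SimpleGraph.neighborFinset_eq_filter, Finset.sum_filter,
    Fin.sum_univ_six, Fin.forall_fin_succ]
  simp [prismGraph, prismEdges]

theorem mem_span_of_isBalanced_prismGraph {K M : Type*} [Field K] [CharZero K] [AddCommGroup M]
    [Module K M] {v : Fin 6 → M} {θ : K} (h : prismGraph.IsBalanced v θ) (i : Fin 6) :
    v i ∈ span K {v 0, v 1} := by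
  set p := span K {v 0, v 1}
  have m0 : v 0 ∈ p := subset_span (by simp)
  have m1 : v 1 ∈ p := subset_span (by simp)
  obtain ⟨e0, e1, e2, e3, e4, e5⟩ := isBalanced_prismGraph_iff.1 h
  set s := v 0 + v 1 + v 2
  have h3 : v 3 = (θ + 1) • v 0 - s := by linear_combination (norm := module) e0
  have h4 : v 4 = (θ + 1) • v 1 - s := by linear_combination (norm := module) e1
  have h5 : v 5 = (θ + 1) • v 2 - s := by linear_combination (norm := module) e2
  have k0 : (θ * (θ + 2)) • v 0 = (2 * θ - 1) • s := by
    linear_combination (norm := module) h4 + h5 - e3 - θ • h3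
  have k2 : (θ * (θ + 2)) • v 2 = (2 * θ - 1) • s := by
    linear_combination (norm := module) h3 + h4 - e5 - θ • h5
  have coprime : θ * (θ + 2) = 0 → 2 * θ - 1 ≠ 0 := by
    intro h0 h1
    have : (5 : K) = 0 := by linear_combination 4 * h0 - (2 * θ + 5) * h1
    norm_num at this
  have hv2 : v 2 ∈ p := by
    by_cases hθ : θ * (θ + 2) = 0
    · have hs : s = 0 := by simpa [hθ, coprime hθ] using k0.symm
      rw [show v 2 = -v 0 - v 1 by linear_combination (norm := module) hs]
      exact sub_mem (neg_mem m0) m1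
    · rwa [smul_right_injective M hθ (k2.trans k0.symm)]
  have ms : s ∈ p := add_mem (add_mem m0 m1) hv2
  have bottom {x : M} (hx : x ∈ p) : (θ + 1) • x - s ∈ p := sub_mem (smul_mem _ _ hx) ms
  fin_cases i
  exacts [m0, m1, hv2, h3 ▸ bottom m0, h4 ▸ bottom m1, h5 ▸ bottom hv2]

/-- No realization of the triangular prism is balanced: if `v 0, …, v 5 ∈ ℝ³`
affinely span `ℝ³` and are connected according to the edge-graph of the
triangular prism, then there is no `θ ∈ ℝ` with
`∑_{j ∈ N(i)} v j = θ • v i` for all `i`. -/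
theorem prism_not_balanced
    (v : Fin 6 → Fin 3 → ℝ)
    (hspan : affineSpan ℝ (Set.range v) = ⊤) :
    ¬ ∃ θ : ℝ, ∀ i : Fin 6,
        ∑ j ∈ prismGraph.neighborFinset i, v j = θ • v i := by
  rintro ⟨θ, hθ⟩
  have htop : span ℝ {v 0, v 1} = ⊤ := by
    rw [eq_top_iff, ← span_eq_top_of_affineSpan_eq_top hspan]
    exact span_le.2 (Set.range_subset_iff.2 (mem_span_of_isBalanced_prismGraph hθ))
  have hrank := finrank_span_pair_le (R := ℝ) (v 0) (v 1)
  rw [htop, finrank_top, Module.finrank_fin_fun] at hrank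
  omega
end

section
/- Let G be a graph and suppose, for the second-largest eigenvalue θ₂ whose eigenspace is spanned by the columns of Φ with rows v_i ∈ ℝ^d: (a) for each vertex i there is a θ₂-eigenvector whose strictly unique largest component is at i, and (b) vertices i ≠ j are adjacent iff there is a θ₂-eigenvector whose set of maximal components is exactly {i, j}. Then the map i ↦ v_i is a graph isomorphism from G onto the skeleton of P_G(θ₂) = conv{v_1,…,v_n}: the v_i are n distinct vertices of the polytope, and conv{v_i, v_j} is an edge of the polytope iff ij is an edge of G. -/
/-!
Eigenvectors for `θ` are exactly the vectors `k ↦ f (v k)` for linear functionals `f`, and the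
face of `P = conv {v k}` on which `f` is maximal is the convex hull of the vertices maximising
`f`. So (a) and (b) exhibit `{v i}` and `[v i, v j]` as exposed faces of `P`. Conversely, if
`[v i, v j]` is a face, then `v i ∉ conv {v k | k ≠ i, j} + ℝ (v j - v i)`: a point of `P` on the
line through the edge lies on the edge, and the edge would then contain a further vertex. A
functional separating `v i` from this closed convex set vanishes on `v j - v i`, so it is maximal
exactly at `i` and `j`.
-/

open Matrix Module Set
open scoped Pointwise

section Argmax

variable {ι α : Type*}

def argmaxSet [LE α] (u : ι → α) : Set ι := {k | ∀ l, u l ≤ u k}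

lemma argmaxSet_eq_of_forall_lt [Preorder α] {u : ι → α} {T : Set ι} {c : α}
    (hT : T.Nonempty) (hon : ∀ k ∈ T, u k = c) (hoff : ∀ k ∉ T, u k < c) : argmaxSet u = T := by
  obtain ⟨k₀, hk₀⟩ := hT
  have hle : ∀ l, u l ≤ c := fun l => by
    by_cases hl : l ∈ T
    exacts [(hon l hl).le, (hoff l hl).le]
  ext k
  refine ⟨fun hk => ?_, fun hk l => (hon k hk).symm ▸ hle l⟩
  by_contra hkT
  exact (hoff k hkT).not_ge (hon k₀ hk₀ ▸ hk k₀)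

lemma injective_of_forall_argmaxSet_eq_singleton {E : Type*} [Preorder α] {v : ι → E}
    (h : ∀ i, ∃ g : E → α, argmaxSet (g ∘ v) = {i}) : Function.Injective v := by
  intro i j hij
  obtain ⟨g, hg⟩ := h i
  have hi : i ∈ argmaxSet (g ∘ v) := hg ▸ rfl
  have hj : j ∈ argmaxSet (g ∘ v) := fun l => (hi l).trans_eq (by simp [hij])
  exact (hg ▸ hj : j ∈ ({i} : Set ι)).symm

end Argmax

lemma IsExtreme.inter_of_subset {𝕜 E : Type*} [Semiring 𝕜] [PartialOrder 𝕜] [AddCommMonoid E]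
    [SMul 𝕜 E] {A B F : Set E} (hF : IsExtreme 𝕜 A F) (hBA : B ⊆ A) :
    IsExtreme 𝕜 B (B ∩ F) :=
  ⟨inter_subset_left, fun _ hx _ hy _ hz hzs =>
    ⟨hx, hF.left_mem_of_mem_openSegment (hBA hx) (hBA hy) hz.2 hzs⟩⟩

section RealVectorSpace

variable {E : Type*} [AddCommGroup E] [Module ℝ E]

lemma IsExtreme.mem_segment_of_mem_affineSpan {A : Set E} {a b q : E}
    (hF : IsExtreme ℝ A (segment ℝ a b)) (hab : a ≠ b) (hq : q ∈ A)
    (hqab : q ∈ line[ℝ, a, b]) : q ∈ segment ℝ a b := by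
  have ha : a ∈ A := hF.subset (left_mem_segment ℝ a b)
  have hb : b ∈ A := hF.subset (right_mem_segment ℝ a b)
  have hleft : ∀ {x y z : E}, x ∈ A → z ∈ A → y ∈ segment ℝ a b → Sbtw ℝ x y z →
      x ∈ segment ℝ a b := fun hx hz hy hxyz =>
    hF.left_mem_of_mem_openSegment hx hz hy
      (by rw [openSegment_eq_image_lineMap]; exact hxyz.mem_image_Ioo)
  rcases (collinear_insert_of_mem_affineSpan_pair hqab).wbtw_or_wbtw_or_wbtw with h | h | h
  · rcases eq_or_ne a q with rfl | haq
    · exact left_mem_segment ℝ a b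
    · exact hleft hq hb (left_mem_segment ℝ a b) ⟨h, haq, hab⟩
  · rcases eq_or_ne b q with rfl | hbq
    · exact right_mem_segment ℝ a b
    · exact hleft hq ha (right_mem_segment ℝ a b) (sbtw_comm.1 ⟨h, hab.symm, hbq⟩)
  · exact segment_symm ℝ a b ▸ mem_segment_iff_wbtw.2 h

lemma ContinuousLinearMap.mem_toExposed_convexHull_iff [TopologicalSpace E]
    (l : StrongDual ℝ E) {s : Set E} {x : E} (hx : x ∈ convexHull ℝ s) :
    x ∈ l.toExposed (convexHull ℝ s) ↔ ∀ y ∈ s, l y ≤ l x :=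
  ⟨fun h y hy => h.2 y (subset_convexHull ℝ s hy), fun h =>
    ⟨hx, convexHull_min h (convex_halfSpace_le l.isLinear (l x))⟩⟩

section LocallyConvex

variable [TopologicalSpace E] [T2Space E] [IsTopologicalAddGroup E] [ContinuousSMul ℝ E]
  [LocallyConvexSpace ℝ E]

lemma IsExtreme.eq_convexHull_inter {s F : Set E} (hs : s.Finite)
    (hF : IsExtreme ℝ (convexHull ℝ s) F) (hFc : Convex ℝ F) (hFcl : IsClosed F) :
    F = convexHull ℝ (s ∩ F) := by
  refine Subset.antisymm ?_ (convexHull_min inter_subset_right hFc)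
  -- Krein–Milman for the compact convex set `F`, whose extreme points are vertices in `s`
  have hext : F.extremePoints ℝ ⊆ s ∩ F := fun x hx =>
    ⟨extremePoints_convexHull_subset (hF.extremePoints_subset_extremePoints hx), hx.1⟩
  calc F = closure (convexHull ℝ (F.extremePoints ℝ)) :=
        (closure_convexHull_extremePoints
          ((hs.isCompact_convexHull ℝ).of_isClosed_subset hFcl hF.subset) hFc).symm
    _ ⊆ closure (convexHull ℝ (s ∩ F)) := closure_mono (convexHull_mono hext)
    _ = convexHull ℝ (s ∩ F) :=
        ((hs.subset inter_subset_left).isCompact_convexHull ℝ).isClosed.closure_eq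

lemma exists_dual_lt_of_notMem_add_span {K : Set E} (hK : IsCompact K) (hKc : Convex ℝ K)
    {x w : E} (hx : x ∉ K + ((ℝ ∙ w) : Set E)) :
    ∃ f : StrongDual ℝ E, f w = 0 ∧ ∀ a ∈ K, f a < f x := by
  rcases K.eq_empty_or_nonempty with rfl | ⟨a₀, ha₀⟩
  · exact ⟨0, rfl, by simp⟩
  obtain ⟨f, u, hfu, hux⟩ := geometric_hahn_banach_closed_point (hKc.add (ℝ ∙ w).convex)
    ((ℝ ∙ w).closed_of_finiteDimensional.add_left_of_isCompact hK) hx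
  have hline : ∀ t : ℝ, f a₀ + t * f w < u := fun t => by
    simpa using
      hfu _ (add_mem_add ha₀ (Submodule.smul_mem _ t (Submodule.mem_span_singleton_self _)))
  have hfw : f w = 0 := by
    by_contra h
    have := hline ((u - f a₀) / f w)
    rw [div_mul_cancel₀ _ h] at this
    linarith
  exact ⟨f, hfw, fun a ha =>
    (hfu a (by simpa using add_mem_add ha (zero_mem (ℝ ∙ w)))).trans hux⟩

variable {ι : Type*} [Finite ι]

lemma isExposed_convexHull_image_argmaxSet (v : ι → E) (f : StrongDual ℝ E) :
    IsExposed ℝ (convexHull ℝ (range v)) (convexHull ℝ (v '' argmaxSet (f ∘ v))) := by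
  have hexp : IsExposed ℝ (convexHull ℝ (range v)) (f.toExposed (convexHull ℝ (range v))) :=
    ContinuousLinearMap.toExposed.isExposed
  have hvert : range v ∩ f.toExposed (convexHull ℝ (range v)) = v '' argmaxSet (f ∘ v) := by
    ext x
    constructor
    · rintro ⟨⟨k, rfl⟩, hk⟩
      exact ⟨k, fun l => hk.2 (v l) (subset_convexHull ℝ _ (mem_range_self l)), rfl⟩
    · rintro ⟨k, hk, rfl⟩
      refine ⟨mem_range_self k, (f.mem_toExposed_convexHull_iff
        (subset_convexHull ℝ _ (mem_range_self k))).2 ?_⟩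
      rintro _ ⟨l, rfl⟩
      exact hk l
  rw [← hvert, ← hexp.isExtreme.eq_convexHull_inter (finite_range v)
    (hexp.convex (convex_convexHull ℝ _))
    (hexp.isClosed ((finite_range v).isCompact_convexHull ℝ).isClosed)]
  exact hexp

section Vertices

variable {v : ι → E} {i j : ι}

lemma notMem_convexHull_add_span_of_isExtreme_segment
    (hv : ∀ k, v k ∈ (convexHull ℝ (range v)).extremePoints ℝ)
    (hinj : Function.Injective v)
    (hseg : IsExtreme ℝ (convexHull ℝ (range v)) (segment ℝ (v i) (v j))) (hij : i ≠ j) :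
    v i ∉ convexHull ℝ (v '' {i, j}ᶜ) + ((ℝ ∙ (v j - v i)) : Set E) := by
  set S := v '' {i, j}ᶜ
  rintro ⟨c, hc, _, hy, hcy⟩
  obtain ⟨t, rfl⟩ := Submodule.mem_span_singleton.1 hy
  have hcP : c ∈ convexHull ℝ (range v) := convexHull_mono (image_subset_range v _) hc
  have hcline : c ∈ line[ℝ, v i, v j] := by
    convert AffineMap.lineMap_mem_affineSpan_pair (-t) (v i) (v j) using 1
    rw [AffineMap.lineMap_apply_module', eq_sub_of_add_eq hcy]
    module
  have hcseg := hseg.mem_segment_of_mem_affineSpan (hinj.ne hij) hcP hcline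
  have hSfin : S.Finite := (toFinite _).image v
  have hsegcl : IsClosed (segment ℝ (v i) (v j)) :=
    convexHull_pair (𝕜 := ℝ) (v i) (v j) ▸ ((toFinite _).isCompact_convexHull ℝ).isClosed
  have hface :=
    (hseg.inter_of_subset (convexHull_mono (image_subset_range v _))).eq_convexHull_inter hSfin
      ((convex_convexHull ℝ S).inter (convex_segment _ _))
      ((hSfin.isCompact_convexHull ℝ).isClosed.inter hsegcl)
  obtain ⟨_, ⟨k, hk, rfl⟩, -, hkseg⟩ :
      (S ∩ (convexHull ℝ S ∩ segment ℝ (v i) (v j))).Nonempty := by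
    by_contra h
    rw [not_nonempty_iff_eq_empty.1 h, convexHull_empty] at hface
    exact hface.subset ⟨hc, hcseg⟩
  obtain h | h := (mem_extremePoints_iff_forall_segment.1 (hv k)).2 _
    (subset_convexHull ℝ _ (mem_range_self i)) _ (subset_convexHull ℝ _ (mem_range_self j)) hkseg
  exacts [hk (Or.inl (hinj h).symm), hk (Or.inr (hinj h).symm)]

lemma exists_argmaxSet_eq_pair_of_isExtreme_segment
    (hv : ∀ k, v k ∈ (convexHull ℝ (range v)).extremePoints ℝ)
    (hinj : Function.Injective v)
    (hseg : IsExtreme ℝ (convexHull ℝ (range v)) (segment ℝ (v i) (v j))) (hij : i ≠ j) :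
    ∃ f : StrongDual ℝ E, argmaxSet (f ∘ v) = {i, j} := by
  obtain ⟨f, hfw, hf⟩ := exists_dual_lt_of_notMem_add_span
    (((toFinite _).image v).isCompact_convexHull ℝ) (convex_convexHull ℝ _)
    (notMem_convexHull_add_span_of_isExtreme_segment hv hinj hseg hij)
  have hji : f (v j) = f (v i) := by
    rw [map_sub, sub_eq_zero] at hfw
    exact hfw
  refine ⟨f, argmaxSet_eq_of_forall_lt (insert_nonempty i {j}) ?_ fun k hk =>
    hf _ (subset_convexHull ℝ _ (mem_image_of_mem v hk))⟩
  rintro k (rfl | rfl)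
  exacts [rfl, hji]

lemma isExtreme_segment_iff_exists_argmaxSet_eq_pair
    (hv : ∀ k, v k ∈ (convexHull ℝ (range v)).extremePoints ℝ)
    (hinj : Function.Injective v) (hij : i ≠ j) :
    IsExtreme ℝ (convexHull ℝ (range v)) (segment ℝ (v i) (v j)) ↔
      ∃ f : StrongDual ℝ E, argmaxSet (f ∘ v) = {i, j} := by
  refine ⟨fun hseg => exists_argmaxSet_eq_pair_of_isExtreme_segment hv hinj hseg hij, ?_⟩
  rintro ⟨f, hf⟩
  simpa [hf, image_pair, convexHull_pair] using (isExposed_convexHull_image_argmaxSet v f).isExtreme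

end Vertices

end LocallyConvex

end RealVectorSpace

lemma Matrix.mulVec_eq_smul_iff_exists_mulVec_eq {R n m : Type*} [CommRing R] [Fintype n]
    [DecidableEq n] [Fintype m] {A : Matrix n n R} {Φ : Matrix n m R} {θ : R}
    (hspan : Submodule.span R (range Φᵀ) = End.eigenspace (toLin' A) θ) {u : n → R} :
    A *ᵥ u = θ • u ↔ ∃ x, Φ *ᵥ x = u := by
  rw [← toLin'_apply, ← End.mem_eigenspace_iff, ← hspan, show range Φᵀ = range Φ.col from rfl,
    ← range_mulVecLin]
  rfl

lemma Matrix.exists_mulVec_eq_iff_exists_dual {ι m : Type*} [Fintype m] [DecidableEq m]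
    {Φ : Matrix ι m ℝ} {u : ι → ℝ} :
    (∃ x, Φ *ᵥ x = u) ↔ ∃ f : StrongDual ℝ (m → ℝ), (f ∘ fun i => Φ i) = u := by
  constructor
  · rintro ⟨x, rfl⟩
    refine ⟨LinearMap.toContinuousLinearMap (dotProductEquiv ℝ m x), funext fun k => ?_⟩
    simp [mulVec, dotProduct_comm]
  · rintro ⟨f, rfl⟩
    refine ⟨(dotProductEquiv ℝ m).symm f.toLinearMap, funext fun k => ?_⟩
    have h := LinearMap.congr_fun ((dotProductEquiv ℝ m).apply_symm_apply f.toLinearMap) (Φ k)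
    rw [dotProductEquiv_apply_apply, dotProduct_comm] at h
    exact h

theorem spectral_graph_characterization_general
    (n d : ℕ)
    (G : SimpleGraph (Fin n)) [DecidableRel G.Adj]
    (θ : ℝ)
    (Φ : Matrix (Fin n) (Fin d) ℝ)
    (hspan : Submodule.span ℝ (Set.range Φᵀ) =
        Module.End.eigenspace (Matrix.toLin' (G.adjMatrix ℝ)) θ)
    -- (a): each vertex is singled out by some eigenvector
    (ha : ∀ i : Fin n, ∃ u : Fin n → ℝ, (G.adjMatrix ℝ).mulVec u = θ • u ∧
        {k : Fin n | ∀ l : Fin n, u l ≤ u k} = {i})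
    -- (b): adjacency is characterized by eigenvectors maximal exactly on pairs
    (hb : ∀ i j : Fin n, i ≠ j →
        (G.Adj i j ↔ ∃ u : Fin n → ℝ, (G.adjMatrix ℝ).mulVec u = θ • u ∧
          {k : Fin n | ∀ l : Fin n, u l ≤ u k} = {i, j})) :
    Function.Injective (fun i : Fin n => Φ i) ∧
    (∀ i : Fin n, Φ i ∈
        Set.extremePoints ℝ (convexHull ℝ (Set.range fun i : Fin n => Φ i))) ∧
    (∀ i j : Fin n, i ≠ j →
        (G.Adj i j ↔
          IsExtreme ℝ (convexHull ℝ (Set.range fun i : Fin n => Φ i))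
            (segment ℝ (Φ i) (Φ j)))) := by
  have heig : ∀ T : Set (Fin n), (∃ u, (G.adjMatrix ℝ) *ᵥ u = θ • u ∧ argmaxSet u = T) ↔
      ∃ f : StrongDual ℝ (Fin d → ℝ), argmaxSet (f ∘ fun i => Φ i) = T := fun T => by
    simp only [mulVec_eq_smul_iff_exists_mulVec_eq hspan, exists_mulVec_eq_iff_exists_dual,
      exists_exists_eq_and]
  have ha' := fun i => (heig {i}).1 (ha i)
  have hinj := injective_of_forall_argmaxSet_eq_singleton
    fun i => (ha' i).elim fun f hf => ⟨f, hf⟩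
  have hext : ∀ i, Φ i ∈ (convexHull ℝ (range fun i => Φ i)).extremePoints ℝ := fun i => by
    obtain ⟨f, hf⟩ := ha' i
    simpa [hf] using (isExposed_convexHull_image_argmaxSet (fun i => Φ i) f).isExtreme
  exact ⟨hinj, hext, fun i j hij => (hb i j hij).trans <| (heig {i, j}).trans
    (isExtreme_segment_iff_exists_argmaxSet_eq_pair hext hinj hij).symm⟩

/-- Suppose the columns of `Φ` span the eigenspace of the second-largest
adjacency eigenvalue `θ₂` of a graph `G`, with rows `v i := Φ i`, and
(a) for every vertex `i` there is a `θ₂`-eigenvector whose unique largest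
component is at `i`, and (b) two distinct vertices are adjacent iff some
`θ₂`-eigenvector attains its maximum exactly on them.  Then `i ↦ v i` is a
graph isomorphism from `G` onto the skeleton of the `θ₂`-eigenpolytope
`conv {v 1, …, v n}`: the `v i` are `n` distinct vertices of the polytope, and
`conv {v i, v j}` is an edge of the polytope iff `ij` is an edge of `G`. -/
theorem spectral_graph_characterization
    (n d : ℕ)
    (G : SimpleGraph (Fin n)) [DecidableRel G.Adj]
    (θ : ℝ)
    -- θ is the second-largest adjacency eigenvalue of G
    (hθeig : Module.End.HasEigenvalue (Matrix.toLin' (G.adjMatrix ℝ)) θ)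
    (hθsecond : ∃ θ₁ : ℝ, θ < θ₁ ∧
        Module.End.HasEigenvalue (Matrix.toLin' (G.adjMatrix ℝ)) θ₁ ∧
        ∀ μ : ℝ, Module.End.HasEigenvalue (Matrix.toLin' (G.adjMatrix ℝ)) μ →
          μ = θ₁ ∨ μ ≤ θ)
    (Φ : Matrix (Fin n) (Fin d) ℝ)
    (hspan : Submodule.span ℝ (Set.range Φᵀ) =
        Module.End.eigenspace (Matrix.toLin' (G.adjMatrix ℝ)) θ)
    -- (a): each vertex is singled out by some eigenvector
    (ha : ∀ i : Fin n, ∃ u : Fin n → ℝ, (G.adjMatrix ℝ).mulVec u = θ • u ∧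
        {k : Fin n | ∀ l : Fin n, u l ≤ u k} = {i})
    -- (b): adjacency is characterized by eigenvectors maximal exactly on pairs
    (hb : ∀ i j : Fin n, i ≠ j →
        (G.Adj i j ↔ ∃ u : Fin n → ℝ, (G.adjMatrix ℝ).mulVec u = θ • u ∧
          {k : Fin n | ∀ l : Fin n, u l ≤ u k} = {i, j})) :
    Function.Injective (fun i : Fin n => Φ i) ∧
    (∀ i : Fin n, Φ i ∈
        Set.extremePoints ℝ (convexHull ℝ (Set.range fun i : Fin n => Φ i))) ∧
    (∀ i j : Fin n, i ≠ j →
        (G.Adj i j ↔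
          IsExtreme ℝ (convexHull ℝ (Set.range fun i : Fin n => Φ i))
            (segment ℝ (Φ i) (Φ j)))) :=
  spectral_graph_characterization_general n d G θ Φ hspan ha hb
end

section
/- The Holt graph is not θ₂-spectral: it is a 4-regular graph on 27 vertices whose second-largest adjacency eigenvalue has multiplicity 6, and a full-dimensional polytope in ℝ^6 has every vertex of degree at least 6 in its edge-graph; hence the Holt graph cannot be the edge-graph of its θ₂-eigenpolytope. -/
/-!
At a vertex `x` of a polytope `P = conv s`, the cone generated by `P - x` is salient, because `x`
is extreme, and it is generated by the finite set `s - x`. Each element of an irredundant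
generating subset spans an extreme ray of a salient cone, and if the ray through `y - x` is
extreme then `[x, y]` is an edge of `P`, since `y` is a vertex. So the edge directions at `x` span
`span (s - x)`, and `dim span s ≤ deg x + 1`. For the `θ₂`-eigenpolytope of a `4`-regular graph
with `dim E_θ₂ = 6` this would give `6 ≤ 5`.
-/

open Matrix Module Set Submodule PointedCone
open scoped Pointwise

theorem Submodule.exists_subset_span_eq_forall_notMem_span_sdiff {R M : Type*} [Semiring R]
    [AddCommMonoid M] [Module R M] {G₀ : Set M} (hG₀ : G₀.Finite) :
    ∃ G ⊆ G₀, span R G = span R G₀ ∧ ∀ g ∈ G, g ∉ span R (G \ {g}) := by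
  obtain ⟨G, ⟨hGG₀, hG⟩, hmin⟩ :=
    (hG₀.finite_subsets.subset fun G (hG : G ⊆ G₀ ∧ span R G₀ ≤ span R G) => hG.1).exists_minimal
      ⟨G₀, subset_rfl, le_rfl⟩
  refine ⟨G, hGG₀, le_antisymm (span_mono hGG₀) hG, fun g hg hgG => ?_⟩
  have hgen : span R G₀ ≤ span R (G \ {g}) := by
    rwa [← span_insert_eq_span hgG, insert_sdiff_self_of_mem hg]
  exact (hmin ⟨sdiff_subset.trans hGG₀, hgen⟩ sdiff_subset hg).2 rfl

variable {𝕜 E : Type*} [Field 𝕜] [LinearOrder 𝕜] [IsStrictOrderedRing 𝕜]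
  [AddCommGroup E] [Module 𝕜 E]

theorem PointedCone.exists_pos_mem_smul_of_mem_hull {K : Set E} (hK : Convex 𝕜 K)
    (h0 : (0 : E) ∈ K) {u : E} (hu : u ∈ hull 𝕜 K) : ∃ r : 𝕜, 0 < r ∧ u ∈ r • K := by
  have hle : hull 𝕜 K ≤ (ConvexCone.hull 𝕜 K).toPointedCone (ConvexCone.subset_hull h0) :=
    span_le.2 ConvexCone.subset_hull
  exact (ConvexCone.mem_hull_of_convex hK).1 (hle hu)

theorem PointedCone.sub_mem_hull_image_sub_of_mem_convexHull {s : Set E} {x q : E}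
    (hq : q ∈ convexHull 𝕜 s) : q - x ∈ hull 𝕜 ((· - x) '' s) := by
  refine convexHull_min (t := (· - x) ⁻¹' (hull 𝕜 ((· - x) '' s) : Set E))
    (fun y hy => subset_hull (mem_image_of_mem _ hy)) ?_ hq
  simpa [sub_eq_add_neg, add_comm] using
    (hull 𝕜 ((· - x) '' s)).convex.translate_preimage_right (-x)

theorem PointedCone.salient_hull_image_sub_of_mem_extremePoints {P : Set E} {x : E}
    (hP : Convex 𝕜 P) (hx : x ∈ P.extremePoints 𝕜) :
    (hull 𝕜 ((· - x) '' P) : ConvexCone 𝕜 E).Salient := by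
  have hconv : Convex 𝕜 ((· - x) '' P) := by
    simpa [sub_eq_add_neg, add_comm] using hP.translate (-x)
  have h0 : (0 : E) ∈ (· - x) '' P := ⟨x, hx.1, sub_self x⟩
  intro u hu hne hneg
  obtain ⟨r, hr, _, ⟨y, hy, rfl⟩, rfl⟩ := exists_pos_mem_smul_of_mem_hull hconv h0 hu
  obtain ⟨r', hr', _, ⟨y', hy', rfl⟩, hr'y'⟩ := exists_pos_mem_smul_of_mem_hull hconv h0 hneg
  have hseg : x ∈ openSegment 𝕜 y y' := by
    refine ⟨r / (r + r'), r' / (r + r'), by positivity, by positivity, by field_simp, ?_⟩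
    simp only at hr'y'
    have : r + r' ≠ 0 := by positivity
    linear_combination (norm := match_scalars <;> field_simp <;> ring) (r + r')⁻¹ • hr'y'
  obtain rfl := (mem_extremePoints.1 hx).2 y hy y' hy' hseg |>.1
  simp at hne

theorem PointedCone.exists_eq_smul_of_add_eq_smul {G : Set E} {g : E}
    (hsal : (hull 𝕜 G : ConvexCone 𝕜 E).Salient) (hg : g ∈ G) (hgG : g ∉ hull 𝕜 (G \ {g}))
    {u w : E} (hu : u ∈ hull 𝕜 G) (hw : w ∈ hull 𝕜 G) {c : 𝕜} (huw : u + w = c • g) :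
    ∃ a : 𝕜, 0 ≤ a ∧ u = a • g := by
  have hzero : ∀ z ∈ hull 𝕜 G, -z ∈ hull 𝕜 G → z = 0 := fun z hz hz' =>
    by_contra fun hne => hsal z hz hne hz'
  rw [← insert_sdiff_self_of_mem hg] at hu hw
  obtain ⟨⟨a, ha⟩, u', hu', rfl⟩ := mem_span_insert.1 hu
  obtain ⟨⟨b, hb⟩, w', hw', rfl⟩ := mem_span_insert.1 hw
  have hsum : (a + b) • g + (u' + w') = c • g := by
    rw [← huw, add_smul]; simp only [Nonneg.mk_smul]; abel
  rcases lt_or_ge (a + b) c with hlt | hge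
  · refine absurd ?_ hgG
    have hdiff : (c - (a + b)) • g = u' + w' := by rw [sub_smul, ← hsum]; abel
    have hmem := (hull 𝕜 _).smul_mem (inv_nonneg.2 (sub_pos.2 hlt).le) (add_mem hu' hw')
    rwa [← hdiff, inv_smul_smul₀ (sub_pos.2 hlt).ne'] at hmem
  · have hmono : hull 𝕜 (G \ {g}) ≤ hull 𝕜 G := span_mono sdiff_subset
    have hneg : -(u' + w') = (a + b - c) • g := by rw [sub_smul, ← hsum]; abel
    have hsum0 : u' + w' = 0 :=
      hzero _ (hmono (add_mem hu' hw'))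
        (hneg ▸ (hull 𝕜 G).smul_mem (sub_nonneg.2 hge) (subset_hull hg))
    have hu'0 : u' = 0 :=
      hzero _ (hmono hu') (by rw [neg_eq_of_add_eq_zero_right hsum0]; exact hmono hw')
    exact ⟨a, ha, by rw [hu'0, add_zero]; rfl⟩

theorem lineMap_mem_segment_of_mem_extremePoints {P : Set E} {x y : E} {α : 𝕜} (hx : x ∈ P)
    (hy : y ∈ P.extremePoints 𝕜) (hα : 0 ≤ α) (hP : AffineMap.lineMap x y α ∈ P) :
    AffineMap.lineMap x y α ∈ segment 𝕜 x y := by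
  rcases le_or_gt α 1 with hα1 | hα1
  · exact segment_eq_image_lineMap 𝕜 x y ▸ mem_image_of_mem _ ⟨hα, hα1⟩
  · have hyseg : y ∈ openSegment 𝕜 x (AffineMap.lineMap x y α) := by
      rw [openSegment_eq_image_lineMap]
      refine ⟨α⁻¹, ⟨by positivity, inv_lt_one_of_one_lt₀ hα1⟩, ?_⟩
      rw [AffineMap.lineMap_lineMap_right, inv_mul_cancel₀ (by positivity),
        AffineMap.lineMap_apply_one]
    obtain rfl := ((mem_extremePoints.1 hy).2 x hx _ hP hyseg).1
    simp

variable (𝕜) in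
def edgeNeighbors (s : Set E) (x : E) : Set E :=
  {y ∈ s | y ≠ x ∧ IsExtreme 𝕜 (convexHull 𝕜 s) (segment 𝕜 x y)}

theorem isExtreme_segment_of_notMem_hull_sdiff {s G : Set E} {x y : E}
    (hs : s ⊆ (convexHull 𝕜 s).extremePoints 𝕜) (hx : x ∈ s) (hy : y ∈ s)
    (hG : hull 𝕜 G = hull 𝕜 ((· - x) '' s)) (hyG : y - x ∈ G)
    (hyG' : y - x ∉ hull 𝕜 (G \ {y - x})) :
    IsExtreme 𝕜 (convexHull 𝕜 s) (segment 𝕜 x y) := by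
  have hxP : x ∈ convexHull 𝕜 s := subset_convexHull 𝕜 s hx
  have hsal : (hull 𝕜 G : ConvexCone 𝕜 E).Salient := by
    rw [hG]
    exact (salient_hull_image_sub_of_mem_extremePoints (convex_convexHull 𝕜 s) (hs hx)).anti
      fun _ h => span_mono (image_mono (subset_convexHull 𝕜 s)) h
  have hmem : ∀ q ∈ convexHull 𝕜 s, q - x ∈ hull 𝕜 G := fun q hq =>
    hG ▸ sub_mem_hull_image_sub_of_mem_convexHull hq
  refine ⟨(convex_convexHull 𝕜 s).segment_subset hxP (subset_convexHull 𝕜 s hy), ?_⟩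
  rintro q₁ hq₁ q₂ hq₂ z hz ⟨a, b, ha, hb, hab, rfl⟩
  obtain ⟨t, -, hzt⟩ := segment_eq_image_lineMap 𝕜 x y ▸ hz
  have hsum : a • (q₁ - x) + b • (q₂ - x) = t • (y - x) := by
    rw [AffineMap.lineMap_apply_module'] at hzt
    linear_combination (norm := module) -hzt - hab • x
  obtain ⟨c, hc, hac⟩ := exists_eq_smul_of_add_eq_smul hsal hyG hyG'
    ((hull 𝕜 G).smul_mem ha.le (hmem q₁ hq₁)) ((hull 𝕜 G).smul_mem hb.le (hmem q₂ hq₂)) hsum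
  have hq₁eq : q₁ = AffineMap.lineMap x y (c / a) := by
    rw [AffineMap.lineMap_apply_module', div_eq_inv_mul, mul_smul, ← hac,
      inv_smul_smul₀ ha.ne', sub_add_cancel]
  rw [hq₁eq] at hq₁ ⊢
  exact lineMap_mem_segment_of_mem_extremePoints hxP (hs hy) (div_nonneg hc ha.le) hq₁

theorem span_image_sub_le_span_image_sub_edgeNeighbors {s : Set E} {x : E} (hfin : s.Finite)
    (hs : s ⊆ (convexHull 𝕜 s).extremePoints 𝕜) (hx : x ∈ s) :
    span 𝕜 ((· - x) '' s) ≤ span 𝕜 ((· - x) '' edgeNeighbors 𝕜 s x) := by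
  obtain ⟨G, hGs, hG, hirr⟩ :=
    exists_subset_span_eq_forall_notMem_span_sdiff (R := {c : 𝕜 // 0 ≤ c}) (hfin.image (· - x))
  have hGN : G ⊆ (· - x) '' edgeNeighbors 𝕜 s x := by
    intro g hg
    obtain ⟨y, hy, rfl⟩ := hGs hg
    have hyx : y ≠ x := by
      rintro rfl
      exact hirr _ hg (by simp [zero_mem])
    exact ⟨y, ⟨hy, hyx, isExtreme_segment_of_notMem_hull_sdiff hs hx hy hG hg (hirr _ hg)⟩, rfl⟩
  calc span 𝕜 ((· - x) '' s) = span 𝕜 (hull 𝕜 ((· - x) '' s) : Set E) :=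
        (span_span_of_tower _ _ _).symm
    _ = span 𝕜 G := by rw [← span_span_of_tower {c : 𝕜 // 0 ≤ c} 𝕜 G, hG]
    _ ≤ span 𝕜 ((· - x) '' edgeNeighbors 𝕜 s x) := span_mono hGN

theorem finrank_span_le_ncard_edgeNeighbors_add_one {s : Set E} {x : E} (hfin : s.Finite)
    (hs : s ⊆ (convexHull 𝕜 s).extremePoints 𝕜) (hx : x ∈ s) :
    finrank 𝕜 (span 𝕜 s) ≤ (edgeNeighbors 𝕜 s x).ncard + 1 := by
  set D := (· - x) '' edgeNeighbors 𝕜 s x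
  have hN : (edgeNeighbors 𝕜 s x).Finite := hfin.subset fun _ hy => hy.1
  have hle : span 𝕜 s ≤ span 𝕜 D ⊔ 𝕜 ∙ x := by
    refine span_le.2 fun y hy => ?_
    have := add_mem_sup (span_image_sub_le_span_image_sub_edgeNeighbors hfin hs hx
      (subset_span (mem_image_of_mem _ hy))) (mem_span_singleton_self x)
    rwa [sub_add_cancel] at this
  have : FiniteDimensional 𝕜 (span 𝕜 D) := FiniteDimensional.span_of_finite 𝕜 (hN.image _)
  have hD : finrank 𝕜 (span 𝕜 D) ≤ (edgeNeighbors 𝕜 s x).ncard := by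
    calc finrank 𝕜 (span 𝕜 D) ≤ D.ncard := by
          have := (hN.image (· - x)).fintype
          rw [ncard_eq_toFinset_card']
          exact finrank_span_le_card D
      _ ≤ (edgeNeighbors 𝕜 s x).ncard := ncard_image_le hN
  have hx1 : finrank 𝕜 (𝕜 ∙ x) ≤ 1 := by simpa using finrank_span_le_card (R := 𝕜) {x}
  have hmono := finrank_mono hle
  have hsup := finrank_add_le_finrank_add_finrank (span 𝕜 D) (𝕜 ∙ x)
  omega

theorem holt_graph_not_theta2_spectral_general
    (G : SimpleGraph (Fin 27)) [DecidableRel G.Adj]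
    (hreg : G.IsRegularOfDegree 4)
    (θ : ℝ)
    -- θ₂ has multiplicity 6
    (hmult : Module.finrank ℝ
        (Module.End.eigenspace (Matrix.toLin' (G.adjMatrix ℝ)) θ) = 6) :
    ¬ ∃ v : Fin 27 → Fin 6 → ℝ,
        -- the arrangement matrix spans the θ₂-eigenspace
        Submodule.span ℝ (Set.range (Matrix.of v)ᵀ) =
          Module.End.eigenspace (Matrix.toLin' (G.adjMatrix ℝ)) θ ∧
        -- v is an isomorphism from G onto the skeleton of the eigenpolytope
        Function.Injective v ∧
        (∀ i : Fin 27, v i ∈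
            Set.extremePoints ℝ (convexHull ℝ (Set.range v))) ∧
        (∀ i j : Fin 27, i ≠ j →
            (G.Adj i j ↔
              IsExtreme ℝ (convexHull ℝ (Set.range v))
                (segment ℝ (v i) (v j)))) := by
  rintro ⟨v, hspan, -, hext, hadj⟩
  have hrank : finrank ℝ (span ℝ (range v)) = 6 := by
    calc finrank ℝ (span ℝ (range v)) = (of v).rank := (rank_eq_finrank_span_row _).symm
      _ = (of v)ᵀ.rank := (rank_transpose _).symm
      _ = finrank ℝ (span ℝ (range (of v)ᵀ)) := rank_eq_finrank_span_row _
      _ = 6 := by rw [hspan, hmult]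
  have hN : edgeNeighbors ℝ (range v) (v 0) ⊆ v '' G.neighborSet 0 := by
    rintro _ ⟨⟨j, rfl⟩, hj0, hedge⟩
    exact ⟨j, (hadj 0 j fun h => hj0 (h ▸ rfl)).2 hedge, rfl⟩
  have hdeg : (v '' G.neighborSet 0).ncard ≤ 4 :=
    calc (v '' G.neighborSet 0).ncard ≤ (G.neighborSet 0).ncard := ncard_image_le (toFinite _)
      _ = 4 := by
        rw [← G.coe_neighborFinset, ncard_coe_finset, G.card_neighborFinset_eq_degree, hreg 0]
  have hdim := finrank_span_le_ncard_edgeNeighbors_add_one (finite_range v)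
    (range_subset_iff.2 hext) (mem_range_self 0)
  have hcard := ncard_le_ncard hN (toFinite _)
  omega

/-- The Holt graph is not `θ₂`-spectral: a `4`-regular graph on `27` vertices
whose second-largest adjacency eigenvalue `θ₂` has multiplicity `6` cannot be
realized as the skeleton of its `θ₂`-eigenpolytope, since that polytope lives
in `ℝ^6` and a full-dimensional polytope in `ℝ^6` has every vertex of degree at
least `6` in its edge-graph. -/
theorem holt_graph_not_theta2_spectral
    (G : SimpleGraph (Fin 27)) [DecidableRel G.Adj]
    (hreg : G.IsRegularOfDegree 4)
    (θ : ℝ)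
    -- θ is the second-largest adjacency eigenvalue of G
    (hθeig : Module.End.HasEigenvalue (Matrix.toLin' (G.adjMatrix ℝ)) θ)
    (hθsecond : ∃ θ₁ : ℝ, θ < θ₁ ∧
        Module.End.HasEigenvalue (Matrix.toLin' (G.adjMatrix ℝ)) θ₁ ∧
        ∀ μ : ℝ, Module.End.HasEigenvalue (Matrix.toLin' (G.adjMatrix ℝ)) μ →
          μ = θ₁ ∨ μ ≤ θ)
    -- θ₂ has multiplicity 6
    (hmult : Module.finrank ℝ
        (Module.End.eigenspace (Matrix.toLin' (G.adjMatrix ℝ)) θ) = 6) :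
    ¬ ∃ v : Fin 27 → Fin 6 → ℝ,
        -- the arrangement matrix spans the θ₂-eigenspace
        Submodule.span ℝ (Set.range (Matrix.of v)ᵀ) =
          Module.End.eigenspace (Matrix.toLin' (G.adjMatrix ℝ)) θ ∧
        -- v is an isomorphism from G onto the skeleton of the eigenpolytope
        Function.Injective v ∧
        (∀ i : Fin 27, v i ∈
            Set.extremePoints ℝ (convexHull ℝ (Set.range v))) ∧
        (∀ i j : Fin 27, i ≠ j →
            (G.Adj i j ↔
              IsExtreme ℝ (convexHull ℝ (Set.range v))
                (segment ℝ (v i) (v j)))) :=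
  holt_graph_not_theta2_spectral_general G hreg θ hmult
end
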